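/- For a real square matrix A, if there exists a symmetric positive definite matrix H such that HA + AᵀH is negative semidefinite, then every eigenvalue λ of A satisfies Re(λ) ≤ 0. -/

import Mathlib

/-!
For an eigenpair `A v = λ v` over `ℂ`, the energy `q = v* H v` is positive and
`v* (H A + Aᴴ H) v = (λ + conj λ) q = 2 Re(λ) q`, so dissipativity forces `Re λ ≤ 0`.
A real matrix is dissipative for the complexified form as soon as it is for real vectors,
since the real part of the Hermitian form at `x + i y` is the sum of the real forms at `x` and `y`.
-/

open Matrix
open scoped ComplexOrder

namespace Matrix

variable {ι : Type*} [Fintype ι]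

theorem exists_mulVec_eq_smul_of_mem_spectrum [DecidableEq ι] {K : Type*} [Field K]
    {A : Matrix ι ι K} {μ : K} (hμ : μ ∈ spectrum K A) : ∃ v ≠ 0, A *ᵥ v = μ • v := by
  rw [← spectrum_toLin', ← Module.End.hasEigenvalue_iff_mem_spectrum] at hμ
  obtain ⟨v, hv, hv0⟩ := hμ.exists_hasEigenvector
  exact ⟨v, hv0, by simpa using Module.End.mem_eigenspace_iff.mp hv⟩

theorem star_dotProduct_mul_add_conjTranspose_mul_mulVec_of_mulVec_eq_smul {R : Type*}
    [CommRing R] [StarRing R] (H : Matrix ι ι R) {A : Matrix ι ι R} {μ : R} {v : ι → R}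
    (hv : A *ᵥ v = μ • v) :
    star v ⬝ᵥ (H * A + Aᴴ * H) *ᵥ v = (μ + star μ) * (star v ⬝ᵥ H *ᵥ v) := by
  rw [add_mulVec, ← mulVec_mulVec, ← mulVec_mulVec, dotProduct_add, hv, mulVec_smul,
    dotProduct_smul, dotProduct_mulVec (star v) Aᴴ, ← star_mulVec, hv, star_smul, smul_dotProduct,
    smul_eq_mul, smul_eq_mul, add_mul]

theorem re_le_zero_of_mem_spectrum_of_posDef [DecidableEq ι] {𝕜 : Type*} [RCLike 𝕜]
    {A H : Matrix ι ι 𝕜} (hH : H.PosDef)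
    (hdiss : ∀ v, RCLike.re (star v ⬝ᵥ (H * A + Aᴴ * H) *ᵥ v) ≤ 0) {μ : 𝕜}
    (hμ : μ ∈ spectrum 𝕜 A) : RCLike.re μ ≤ 0 := by
  obtain ⟨v, hv0, hv⟩ := exists_mulVec_eq_smul_of_mem_spectrum hμ
  have henergy : 0 < RCLike.re (star v ⬝ᵥ H *ᵥ v) :=
    (RCLike.pos_iff.mp (hH.dotProduct_mulVec_pos hv0)).1
  have hform : RCLike.re (star v ⬝ᵥ (H * A + Aᴴ * H) *ᵥ v) =
      2 * RCLike.re μ * RCLike.re (star v ⬝ᵥ H *ᵥ v) := by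
    rw [star_dotProduct_mul_add_conjTranspose_mul_mulVec_of_mulVec_eq_smul H hv, RCLike.star_def,
      RCLike.add_conj, ← RCLike.ofReal_ofNat, ← RCLike.ofReal_mul, RCLike.re_ofReal_mul]
  nlinarith [hdiss v]

theorem re_star_dotProduct_map_ofReal_mulVec (M : Matrix ι ι ℝ) (v : ι → ℂ) :
    (star v ⬝ᵥ M.map Complex.ofReal *ᵥ v).re =
      (fun i ↦ (v i).re) ⬝ᵥ M *ᵥ (fun i ↦ (v i).re)
        + (fun i ↦ (v i).im) ⬝ᵥ M *ᵥ (fun i ↦ (v i).im) := by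
  simp only [dotProduct, mulVec, map_apply, Finset.mul_sum, Complex.re_sum, Pi.star_apply,
    ← Finset.sum_add_distrib]
  refine Finset.sum_congr rfl fun i _ ↦ Finset.sum_congr rfl fun j _ ↦ ?_
  simp [Complex.mul_re, Complex.mul_im]

theorem PosDef.map_ofReal {H : Matrix ι ι ℝ} (hH : H.PosDef) :
    (H.map Complex.ofReal).PosDef := by
  have hherm : (H.map Complex.ofReal).IsHermitian :=
    hH.isHermitian.map _ fun x ↦ (Complex.conj_ofReal x).symm
  refine PosDef.of_dotProduct_mulVec_pos hherm fun v hv ↦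
    Complex.pos_iff.mpr ⟨?_, (hherm.im_star_dotProduct_mulVec_self v).symm⟩
  rw [re_star_dotProduct_map_ofReal_mulVec]
  have hquad (x : ι → ℝ) : 0 ≤ x ⬝ᵥ H *ᵥ x := by
    simpa using hH.posSemidef.dotProduct_mulVec_nonneg x
  by_cases hre : (fun i ↦ (v i).re) = 0
  · have him : (fun i ↦ (v i).im) ≠ 0 := fun him ↦
      hv (funext fun i ↦ Complex.ext (congrFun hre i) (congrFun him i))
    exact add_pos_of_nonneg_of_pos (hquad _) (by simpa using hH.dotProduct_mulVec_pos him)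
  · exact add_pos_of_pos_of_nonneg (by simpa using hH.dotProduct_mulVec_pos hre) (hquad _)

end Matrix

/-- If `H A + Aᵀ H` is negative semidefinite for some SPD energy matrix `H`,
then every (complex) eigenvalue of `A` has nonpositive real part. -/
theorem energy_stability_dissipative {n : ℕ}
    (A H : Matrix (Fin n) (Fin n) ℝ)
    (hH : H.PosDef)
    (hdiss : ∀ x : Fin n → ℝ, x ⬝ᵥ (H * A + Aᵀ * H).mulVec x ≤ 0) :
    ∀ lam ∈ spectrum ℂ (A.map (Complex.ofReal)), lam.re ≤ 0 := by
  have hmap : (H * A + Aᵀ * H).map Complex.ofReal = H.map Complex.ofReal * A.map Complex.ofReal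
      + (A.map Complex.ofReal)ᴴ * H.map Complex.ofReal := by
    ext i j
    simp [Matrix.mul_apply]
  refine fun lam hlam ↦ re_le_zero_of_mem_spectrum_of_posDef hH.map_ofReal (fun v ↦ ?_) hlam
  rw [← hmap]
  exact (re_star_dotProduct_map_ofReal_mulVec _ v).trans_le (add_nonpos (hdiss _) (hdiss _))
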